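/- arXiv:2503.02314 — 4 statements merged into one kernel-verified Lean document; each statement's English description precedes it below -/
import Mathlib

section
/- For all 0 ≤ s < t ≤ T, the operators ι_t^* satisfy ‖ι_t^* − ι_s^*‖_{L(H)} ≤ ∫_s^t ‖Φ(r)‖_{L(H)} dr. -/
open MeasureTheory Set
open scoped RealInnerProductSpace

/-!
`ι_t^* - ι_s^*` is self-adjoint, and by (C2) its quadratic form is `x ↦ ∫_s^t ⟪x, Φ(r) x⟫ dr`,
which is bounded by `(∫_s^t ‖Φ(r)‖ dr) ‖x‖²`. The norm of a self-adjoint operator is the supremum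
of its Rayleigh quotient, which gives the bound.
-/

theorem ContinuousLinearMap.opNorm_le_of_abs_re_inner_self_le {𝕜 E : Type*} [RCLike 𝕜]
    [NormedAddCommGroup E] [InnerProductSpace 𝕜 E] {T : E →L[𝕜] E}
    (hT : (T : E →ₗ[𝕜] E).IsSymmetric) {C : ℝ} (hC : 0 ≤ C)
    (h : ∀ x, |RCLike.re (inner 𝕜 (T x) x)| ≤ C * ‖x‖ ^ 2) : ‖T‖ ≤ C := by
  rw [T.norm_eq_iSup_rayleighQuotient hT]
  refine ciSup_le fun x => ?_
  rw [rayleighQuotient, reApplyInnerSelf_apply, abs_div, abs_sq]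
  exact div_le_of_le_mul₀ (by positivity) hC (h x)

theorem abs_intervalIntegral_inner_apply_self_le {H : Type*} [NormedAddCommGroup H]
    [InnerProductSpace ℝ H] {f : ℝ → H →L[ℝ] H} {a b : ℝ} (hab : a ≤ b)
    (hf : IntervalIntegrable (fun r => ‖f r‖) volume a b) (x : H) :
    |∫ r in a..b, ⟪x, f r x⟫| ≤ (∫ r in a..b, ‖f r‖) * ‖x‖ ^ 2 := by
  rw [← Real.norm_eq_abs, ← intervalIntegral.integral_mul_const (‖x‖ ^ 2) fun r => ‖f r‖]
  refine intervalIntegral.norm_integral_le_of_norm_le hab (ae_of_all _ fun r _ => ?_)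
    (hf.mul_const _)
  calc ‖⟪x, f r x⟫‖ ≤ ‖x‖ * ‖f r x‖ := norm_inner_le_norm x (f r x)
    _ ≤ ‖x‖ * (‖f r‖ * ‖x‖) := by gcongr; exact (f r).le_opNorm x
    _ = ‖f r‖ * ‖x‖ ^ 2 := by ring

theorem MeasureTheory.Integrable.inner_apply_self {α H : Type*} [MeasurableSpace α] {μ : Measure α}
    [NormedAddCommGroup H] [InnerProductSpace ℝ H] {f : α → H →L[ℝ] H}
    (hf : Integrable f μ) (x : H) : Integrable (fun r => ⟪x, f r x⟫) μ :=
  ((innerSL ℝ x).comp (ContinuousLinearMap.apply ℝ H x)).integrable_comp hf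

theorem iota_lipschitz_bound_general
    {H : Type*} [NormedAddCommGroup H] [InnerProductSpace ℝ H]
    (T : ℝ)
    (ip : ℝ → H → H → ℝ)
    (hsymm : ∀ t ∈ Icc (0:ℝ) T, ∀ x y : H, ip t x y = ip t y x)
    (Φ : ℝ → H →L[ℝ] H)
    (hΦmeas : AEStronglyMeasurable (fun t => Φ t) (volume.restrict (Icc (0:ℝ) T)))
    (hΦint : IntegrableOn (fun t => ‖Φ t‖) (Icc (0:ℝ) T))
    (hC2 : ∀ t ∈ Icc (0:ℝ) T, ∀ x : H, ip t x x - ⟪x, x⟫ = ∫ s in (0:ℝ)..t, ⟪x, Φ s x⟫)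
    (ι : ℝ → H →L[ℝ] H)
    (hι : ∀ t ∈ Icc (0:ℝ) T, ∀ x y : H, ⟪ι t x, y⟫ = ip t x y)
    :
    ∀ s t : ℝ, 0 ≤ s → s < t → t ≤ T →
      ‖ι t - ι s‖ ≤ ∫ r in s..t, ‖Φ r‖ := by
  intro s t hs hst htT
  have hsI : s ∈ Icc (0:ℝ) T := ⟨hs, hst.le.trans htT⟩
  have htI : t ∈ Icc (0:ℝ) T := ⟨hs.trans hst.le, htT⟩
  have h0I : (0:ℝ) ∈ Icc (0:ℝ) T := ⟨le_rfl, hs.trans (hst.le.trans htT)⟩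
  have hΦ : IntegrableOn Φ (Icc 0 T) := (integrable_norm_iff hΦmeas).1 hΦint
  have hsymmι {u} (hu : u ∈ Icc (0:ℝ) T) : (ι u : H →ₗ[ℝ] H).IsSymmetric := fun x y => by
    rw [ContinuousLinearMap.coe_coe, hι u hu, real_inner_comm, hι u hu, hsymm u hu]
  have hquad (x : H) : ⟪(ι t - ι s) x, x⟫ = ∫ r in s..t, ⟪x, Φ r x⟫ := by
    have hq {u} (hu : u ∈ Icc (0:ℝ) T) : IntervalIntegrable (fun r => ⟪x, Φ r x⟫) volume 0 u :=
      IntegrableOn.intervalIntegrable ((hΦ.mono_set (uIcc_subset_Icc h0I hu)).inner_apply_self x)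
    rw [← intervalIntegral.integral_interval_sub_left (hq htI) (hq hsI), ← hC2 t htI, ← hC2 s hsI,
      sub_apply, inner_sub_left, hι t htI, hι s hsI]
    ring
  refine ContinuousLinearMap.opNorm_le_of_abs_re_inner_self_le ((hsymmι htI).sub (hsymmι hsI))
    (intervalIntegral.integral_nonneg hst.le fun r _ => norm_nonneg _) fun x => ?_
  rw [RCLike.re_to_real, hquad]
  exact abs_intervalIntegral_inner_apply_self_le hst.le
    (hΦint.mono_set (uIcc_subset_Icc hsI htI)).intervalIntegrable x

/-- For `0 ≤ s < t ≤ T`, `‖ι_t^* − ι_s^*‖ ≤ ∫_s^t ‖Φ(r)‖ dr`. -/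
theorem iota_lipschitz_bound
    {H : Type*} [NormedAddCommGroup H] [InnerProductSpace ℝ H] [CompleteSpace H]
    (T : ℝ) (hT : 0 < T)
    (ip : ℝ → H → H → ℝ)
    (hsymm : ∀ t ∈ Icc (0:ℝ) T, ∀ x y : H, ip t x y = ip t y x)
    (hadd : ∀ t ∈ Icc (0:ℝ) T, ∀ x x' y : H, ip t (x + x') y = ip t x y + ip t x' y)
    (hsmul : ∀ t ∈ Icc (0:ℝ) T, ∀ (c : ℝ) (x y : H), ip t (c • x) y = c * ip t x y)
    (hip0 : ∀ x y : H, ip 0 x y = ⟪x, y⟫)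
    (c1 : ℝ) (hc1 : 1 ≤ c1)
    (hC1 : ∀ t ∈ Icc (0:ℝ) T, ∀ x : H,
      c1⁻¹ * ‖x‖ ≤ Real.sqrt (ip t x x) ∧ Real.sqrt (ip t x x) ≤ c1 * ‖x‖)
    (Φ : ℝ → H →L[ℝ] H)
    (hΦsa : ∀ t ∈ Icc (0:ℝ) T, ∀ x y : H, ⟪Φ t x, y⟫ = ⟪x, Φ t y⟫)
    (hΦmeas : AEStronglyMeasurable (fun t => Φ t) (volume.restrict (Icc (0:ℝ) T)))
    (hΦint : IntegrableOn (fun t => ‖Φ t‖) (Icc (0:ℝ) T))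
    (hC2 : ∀ t ∈ Icc (0:ℝ) T, ∀ x : H, ip t x x - ⟪x, x⟫ = ∫ s in (0:ℝ)..t, ⟪x, Φ s x⟫)
    (ι : ℝ → H →L[ℝ] H)
    (hι : ∀ t ∈ Icc (0:ℝ) T, ∀ x y : H, ⟪ι t x, y⟫ = ip t x y)
    :
    ∀ s t : ℝ, 0 ≤ s → s < t → t ≤ T →
      ‖ι t - ι s‖ ≤ ∫ r in s..t, ‖Φ r‖ :=
  iota_lipschitz_bound_general T ip hsymm Φ hΦmeas hΦint hC2 ι hι
end

section
/- Assume H is separable. Then there is a full Lebesgue measure subset Γ of [0,T] such that for every s ∈ Γ and for ALL x, y ∈ H simultaneously, the function t ↦ (ι_t^* x, y) is differentiable at s with derivative (Φ(s) x, y). In other words, for almost every s ∈ [0,T] one has: for every x, y ∈ H, lim_{t→s} [(ι_t^* x, y) − (ι_s^* x, y)]/(t − s) = (Φ(s) x, y). -/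
/-!
Extend `Φ` by zero outside `[0,T]` and let `Γ` consist of the points of `[0,T]` that are
Lebesgue points of `Φ` for the operator norm. By polarization,
`(ι_t^* x, y) = (x, y) + ∫₀ᵗ (Φ(u) x, y) du`. Since `A ↦ (A x, y)` is Lipschitz, a Lebesgue
point of `Φ` is a Lebesgue point of every scalar function `u ↦ (Φ(u) x, y)`, and at a Lebesgue
point an indefinite integral is differentiable with the integrand as derivative. So a single
null set serves all `x, y` at once.
-/

open MeasureTheory Set
open scoped RealInnerProductSpace
open Filter Topology Metric
open scoped Interval

section Polarization

variable {M : Type*} [Add M]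

lemma apply_add_add_self_of_symm {b : M → M → ℝ} (hsymm : ∀ x y, b x y = b y x)
    (hadd : ∀ x x' y, b (x + x') y = b x y + b x' y) (x y : M) :
    b (x + y) (x + y) = b x x + 2 * b x y + b y y := by
  rw [hadd, hsymm x, hsymm y, hadd, hadd, hsymm y x]
  ring

lemma eq_of_apply_self_eq_of_symm {b b' : M → M → ℝ} (hsymm : ∀ x y, b x y = b y x)
    (hadd : ∀ x x' y, b (x + x') y = b x y + b x' y) (hsymm' : ∀ x y, b' x y = b' y x)
    (hadd' : ∀ x x' y, b' (x + x') y = b' x y + b' x' y) (hdiag : ∀ x, b x x = b' x x) :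
    b = b' := by
  ext x y
  have := apply_add_add_self_of_symm hsymm hadd x y
  rw [hdiag, hdiag, hdiag, apply_add_add_self_of_symm hsymm' hadd'] at this
  linarith

end Polarization

section LebesguePoint

variable {E F : Type*} [NormedAddCommGroup E] [NormedAddCommGroup F]

def IsLebesguePoint (f : ℝ → E) (s : ℝ) : Prop :=
  Tendsto (fun r => ⨍ u in closedBall s r, ‖f u - f s‖) (𝓝[>] 0) (𝓝 0)

lemma ae_isLebesguePoint {f : ℝ → E} (hf : LocallyIntegrable f) :
    ∀ᵐ s, IsLebesguePoint f s := by
  filter_upwards [IsUnifLocDoublingMeasure.ae_tendsto_average_norm_sub volume hf 1] with s hs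
  refine hs (fun _ => s) id tendsto_id ?_
  filter_upwards [self_mem_nhdsWithin] with r hr
  exact mem_closedBall_self (by simpa using le_of_lt hr)

lemma setAverage_norm_nonneg (f : ℝ → E) (S : Set ℝ) : 0 ≤ ⨍ u in S, ‖f u‖ := by
  rw [setAverage_eq]
  exact smul_nonneg (by positivity) (integral_nonneg fun _ => norm_nonneg _)

lemma IsLebesguePoint.comp_lipschitzWith {f : ℝ → E} {g : E → F} {K : NNReal}
    (hg : LipschitzWith K g) (hf : LocallyIntegrable f) {s : ℝ} (hs : IsLebesguePoint f s) :
    IsLebesguePoint (g ∘ f) s := by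
  have hle : ∀ r, ⨍ u in closedBall s r, ‖g (f u) - g (f s)‖
      ≤ K * ⨍ u in closedBall s r, ‖f u - f s‖ := by
    intro r
    have hint : IntegrableOn (fun u => ‖f u - f s‖) (closedBall s r) :=
      ((hf.integrableOn_isCompact (isCompact_closedBall s r)).sub
        (integrableOn_const measure_closedBall_lt_top.ne)).norm
    rw [setAverage_eq, setAverage_eq, smul_eq_mul, smul_eq_mul, mul_left_comm,
      ← integral_const_mul (K : ℝ)]
    refine mul_le_mul_of_nonneg_left (integral_mono_of_nonneg
      (Eventually.of_forall fun u => norm_nonneg (g (f u) - g (f s))) (hint.const_mul _)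
      (Eventually.of_forall fun u => ?_)) (inv_nonneg.2 measureReal_nonneg)
    simpa [← dist_eq_norm] using hg.dist_le_mul (f u) (f s)
  exact squeeze_zero (fun r => setAverage_norm_nonneg _ _) hle
    (by simpa using Tendsto.const_mul (K : ℝ) hs)

lemma uIoc_subset_closedBall_abs_sub (s t : ℝ) : Ι s t ⊆ closedBall s |t - s| := by
  rw [Real.closedBall_eq_Icc]
  refine uIoc_subset_uIcc.trans (uIcc_subset_Icc ?_ ?_) <;>
    constructor <;> linarith [le_abs_self (t - s), neg_abs_le (t - s)]

lemma norm_intervalIntegral_sub_le [NormedSpace ℝ E] {f : ℝ → E} (hf : LocallyIntegrable f)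
    (s t : ℝ) :
    ‖∫ u in s..t, (f u - f s)‖ ≤ 2 * |t - s| * ⨍ u in closedBall s |t - s|, ‖f u - f s‖ := by
  have hint : IntegrableOn (fun u => ‖f u - f s‖) (closedBall s |t - s|) :=
    ((hf.integrableOn_isCompact (isCompact_closedBall s _)).sub
      (integrableOn_const measure_closedBall_lt_top.ne)).norm
  calc ‖∫ u in s..t, (f u - f s)‖ ≤ ∫ u in Ι s t, ‖f u - f s‖ :=
        intervalIntegral.norm_integral_le_integral_norm_uIoc
    _ ≤ ∫ u in closedBall s |t - s|, ‖f u - f s‖ :=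
        setIntegral_mono_set hint (Eventually.of_forall fun _ => norm_nonneg _)
          (Eventually.of_forall (uIoc_subset_closedBall_abs_sub s t))
    _ = 2 * |t - s| * ⨍ u in closedBall s |t - s|, ‖f u - f s‖ := by
        rw [← measure_smul_setAverage _ measure_closedBall_lt_top.ne,
          Real.volume_real_closedBall (abs_nonneg _), smul_eq_mul]

lemma tendsto_abs_sub_nhdsNE (s : ℝ) : Tendsto (fun t => |t - s|) (𝓝[≠] s) (𝓝[>] 0) := by
  refine tendsto_nhdsWithin_iff.2 ⟨?_, ?_⟩
  · exact ((continuous_abs.comp (continuous_sub_right s)).tendsto' s 0 (by simp)).mono_left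
      nhdsWithin_le_nhds
  · filter_upwards [self_mem_nhdsWithin] with t ht
    exact abs_pos.2 (sub_ne_zero.2 ht)

lemma IsLebesguePoint.hasDerivAt_intervalIntegral [NormedSpace ℝ E] [CompleteSpace E]
    {f : ℝ → E} (hf : LocallyIntegrable f) {s : ℝ} (hs : IsLebesguePoint f s) (a : ℝ) :
    HasDerivAt (fun t => ∫ u in a..t, f u) (f s) s := by
  have hii : ∀ b c, IntervalIntegrable f volume b c := fun b c =>
    (hf.integrableOn_isCompact isCompact_uIcc).intervalIntegrable
  suffices HasDerivAt (fun t => ∫ u in s..t, f u) (f s) s by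
    convert this.const_add (∫ u in a..s, f u) using 1
    funext t
    rw [intervalIntegral.integral_add_adjacent_intervals (hii a s) (hii s t)]
  rw [hasDerivAt_iff_tendsto_slope, ← tendsto_sub_nhds_zero_iff]
  refine squeeze_zero_norm' ?_
    (by simpa using ((hs.comp (tendsto_abs_sub_nhdsNE s)).const_mul 2))
  filter_upwards [self_mem_nhdsWithin] with t (ht : t ≠ s)
  have hts : t - s ≠ 0 := sub_ne_zero.2 ht
  have hslope : slope (fun t => ∫ u in s..t, f u) s t - f s
      = (t - s)⁻¹ • ∫ u in s..t, (f u - f s) := by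
    rw [intervalIntegral.integral_sub (hii s t) intervalIntegrable_const,
      intervalIntegral.integral_const, slope_def_module, intervalIntegral.integral_same, sub_zero,
      smul_sub, inv_smul_smul₀ hts]
  calc ‖slope (fun t => ∫ u in s..t, f u) s t - f s‖
      = |t - s|⁻¹ * ‖∫ u in s..t, (f u - f s)‖ := by
        rw [hslope, norm_smul, norm_inv, Real.norm_eq_abs]
    _ ≤ |t - s|⁻¹ * (2 * |t - s| * ⨍ u in closedBall s |t - s|, ‖f u - f s‖) :=
        mul_le_mul_of_nonneg_left (norm_intervalIntegral_sub_le hf s t) (by positivity)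
    _ = 2 * ⨍ u in closedBall s |t - s|, ‖f u - f s‖ := by
        field_simp [abs_ne_zero.2 hts]

end LebesguePoint

section InnerApply

variable {H : Type*} [NormedAddCommGroup H] [InnerProductSpace ℝ H]

noncomputable def innerApply (x y : H) : (H →L[ℝ] H) →L[ℝ] ℝ :=
  (innerSLFlip ℝ y).comp (ContinuousLinearMap.apply ℝ H x)

lemma IsLebesguePoint.hasDerivAt_intervalIntegral_inner {Φ : ℝ → H →L[ℝ] H}
    (hΦ : Integrable Φ) {s : ℝ} (hs : IsLebesguePoint Φ s) (a : ℝ) (x y : H) :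
    HasDerivAt (fun t => ∫ u in a..t, ⟪Φ u x, y⟫) ⟪Φ s x, y⟫ s :=
  (hs.comp_lipschitzWith (innerApply x y).lipschitz
    hΦ.locallyIntegrable).hasDerivAt_intervalIntegral
    ((innerApply x y).integrable_comp hΦ).locallyIntegrable a

lemma eq_inner_add_intervalIntegral {T : ℝ} {ip : ℝ → H → H → ℝ}
    (hsymm : ∀ t ∈ Icc (0:ℝ) T, ∀ x y : H, ip t x y = ip t y x)
    (hadd : ∀ t ∈ Icc (0:ℝ) T, ∀ x x' y : H, ip t (x + x') y = ip t x y + ip t x' y)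
    {Φ : ℝ → H →L[ℝ] H} (hΦsa : ∀ t ∈ Icc (0:ℝ) T, ∀ x y : H, ⟪Φ t x, y⟫ = ⟪x, Φ t y⟫)
    (hΦ : IntegrableOn Φ (Icc 0 T))
    (hC2 : ∀ t ∈ Icc (0:ℝ) T, ∀ x : H, ip t x x - ⟪x, x⟫ = ∫ s in (0:ℝ)..t, ⟪x, Φ s x⟫)
    {t : ℝ} (ht : t ∈ Icc 0 T) (x y : H) :
    ip t x y = ⟪x, y⟫ + ∫ u in (0:ℝ)..t, ⟪Φ u x, y⟫ := by
  have hsub : uIcc 0 t ⊆ Icc 0 T := uIcc_subset_Icc ⟨le_rfl, ht.1.trans ht.2⟩ ht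
  have hint : ∀ x y : H, IntervalIntegrable (fun u => ⟪Φ u x, y⟫) volume 0 t := fun x y =>
    IntegrableOn.intervalIntegrable ((innerApply x y).integrable_comp (hΦ.mono_set hsub))
  refine congrFun₂ (eq_of_apply_self_eq_of_symm
    (b' := fun x y => ⟪x, y⟫ + ∫ u in (0:ℝ)..t, ⟪Φ u x, y⟫) (hsymm t ht) (hadd t ht) ?_ ?_ ?_) x y
  · intro x y
    rw [real_inner_comm]
    congr 1
    exact intervalIntegral.integral_congr fun u hu => by
      rw [hΦsa u (hsub hu), real_inner_comm]
  · intro x x' y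
    simp only [map_add, inner_add_left]
    rw [intervalIntegral.integral_add (hint x y) (hint x' y)]
    ring
  · intro x
    rw [intervalIntegral.integral_congr (g := fun u => ⟪x, Φ u x⟫)
      fun u _ => real_inner_comm x (Φ u x)]
    linarith [hC2 t ht x]

end InnerApply

theorem iota_differentiable_ae_general
    {H : Type*} [NormedAddCommGroup H] [InnerProductSpace ℝ H]
    (T : ℝ)
    (ip : ℝ → H → H → ℝ)
    (hsymm : ∀ t ∈ Icc (0:ℝ) T, ∀ x y : H, ip t x y = ip t y x)
    (hadd : ∀ t ∈ Icc (0:ℝ) T, ∀ x x' y : H, ip t (x + x') y = ip t x y + ip t x' y)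
    (Φ : ℝ → H →L[ℝ] H)
    (hΦsa : ∀ t ∈ Icc (0:ℝ) T, ∀ x y : H, ⟪Φ t x, y⟫ = ⟪x, Φ t y⟫)
    (hΦmeas : AEStronglyMeasurable (fun t => Φ t) (volume.restrict (Icc (0:ℝ) T)))
    (hΦint : IntegrableOn (fun t => ‖Φ t‖) (Icc (0:ℝ) T))
    (hC2 : ∀ t ∈ Icc (0:ℝ) T, ∀ x : H, ip t x x - ⟪x, x⟫ = ∫ s in (0:ℝ)..t, ⟪x, Φ s x⟫)
    (ι : ℝ → H →L[ℝ] H)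
    (hι : ∀ t ∈ Icc (0:ℝ) T, ∀ x y : H, ⟪ι t x, y⟫ = ip t x y)
    :
    ∃ Γ : Set ℝ, Γ ⊆ Icc (0:ℝ) T ∧ volume (Icc (0:ℝ) T \ Γ) = 0 ∧
      ∀ s ∈ Γ, ∀ x y : H,
        HasDerivWithinAt (fun t => ⟪ι t x, y⟫) ⟪Φ s x, y⟫ (Icc (0:ℝ) T) s := by
  have hΦ : IntegrableOn Φ (Icc 0 T) := (integrable_norm_iff hΦmeas).1 hΦint
  set Ψ := (Icc (0:ℝ) T).indicator Φ
  have hΨ : Integrable Ψ := IntegrableOn.integrable_indicator (f := Φ) hΦ measurableSet_Icc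
  have hΨΦ : EqOn Ψ Φ (Icc 0 T) := fun u hu => indicator_of_mem hu Φ
  refine ⟨Icc 0 T ∩ {s | IsLebesguePoint Ψ s}, inter_subset_left, ?_, ?_⟩
  · exact measure_mono_null (fun s hs hΨs => hs.2 ⟨hs.1, hΨs⟩)
      (ae_iff.1 (ae_isLebesguePoint hΨ.locallyIntegrable))
  rintro s ⟨hs, hΨs⟩ x y
  have hderiv := ((hΨs.hasDerivAt_intervalIntegral_inner hΨ 0 x y).hasDerivWithinAt
    (s := Icc 0 T)).const_add ⟪x, y⟫
  rw [hΨΦ hs] at hderiv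
  have hrepr : ∀ t ∈ Icc 0 T, ⟪ι t x, y⟫ = ⟪x, y⟫ + ∫ u in (0:ℝ)..t, ⟪Ψ u x, y⟫ := by
    intro t ht
    rw [hι t ht, eq_inner_add_intervalIntegral hsymm hadd hΦsa hΦ hC2 ht]
    refine congrArg _ (intervalIntegral.integral_congr fun u hu => ?_)
    rw [hΨΦ (uIcc_subset_Icc ⟨le_rfl, ht.1.trans ht.2⟩ ht hu)]
  exact hderiv.congr hrepr (hrepr s hs)

/-- If `H` is separable, there is a full-measure subset `Γ` of `[0,T]` such
that for every `s ∈ Γ` and all `x, y ∈ H` simultaneously, `t ↦ (ι_t^* x, y)` is differentiable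
at `s` (within `[0,T]`) with derivative `(Φ(s) x, y)`. -/
theorem iota_differentiable_ae
    {H : Type*} [NormedAddCommGroup H] [InnerProductSpace ℝ H] [CompleteSpace H] [TopologicalSpace.SeparableSpace H]
    (T : ℝ) (hT : 0 < T)
    (ip : ℝ → H → H → ℝ)
    (hsymm : ∀ t ∈ Icc (0:ℝ) T, ∀ x y : H, ip t x y = ip t y x)
    (hadd : ∀ t ∈ Icc (0:ℝ) T, ∀ x x' y : H, ip t (x + x') y = ip t x y + ip t x' y)
    (hsmul : ∀ t ∈ Icc (0:ℝ) T, ∀ (c : ℝ) (x y : H), ip t (c • x) y = c * ip t x y)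
    (hip0 : ∀ x y : H, ip 0 x y = ⟪x, y⟫)
    (c1 : ℝ) (hc1 : 1 ≤ c1)
    (hC1 : ∀ t ∈ Icc (0:ℝ) T, ∀ x : H,
      c1⁻¹ * ‖x‖ ≤ Real.sqrt (ip t x x) ∧ Real.sqrt (ip t x x) ≤ c1 * ‖x‖)
    (Φ : ℝ → H →L[ℝ] H)
    (hΦsa : ∀ t ∈ Icc (0:ℝ) T, ∀ x y : H, ⟪Φ t x, y⟫ = ⟪x, Φ t y⟫)
    (hΦmeas : AEStronglyMeasurable (fun t => Φ t) (volume.restrict (Icc (0:ℝ) T)))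
    (hΦint : IntegrableOn (fun t => ‖Φ t‖) (Icc (0:ℝ) T))
    (hC2 : ∀ t ∈ Icc (0:ℝ) T, ∀ x : H, ip t x x - ⟪x, x⟫ = ∫ s in (0:ℝ)..t, ⟪x, Φ s x⟫)
    (ι : ℝ → H →L[ℝ] H)
    (hι : ∀ t ∈ Icc (0:ℝ) T, ∀ x y : H, ⟪ι t x, y⟫ = ip t x y)
    :
    ∃ Γ : Set ℝ, Γ ⊆ Icc (0:ℝ) T ∧ volume (Icc (0:ℝ) T \ Γ) = 0 ∧
      ∀ s ∈ Γ, ∀ x y : H,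
        HasDerivWithinAt (fun t => ⟪ι t x, y⟫) ⟪Φ s x, y⟫ (Icc (0:ℝ) T) s :=
  iota_differentiable_ae_general T ip hsymm hadd Φ hΦsa hΦmeas hΦint hC2 ι hι
end

section
/- Assume H is separable. Then for all x, y ∈ H and all t ∈ [0,T], one has (ι_{-t}^* x, y) = (x, y) − ∫_0^t (ι_{-s}^* Φ(s) ι_{-s}^* x, y) ds. -/
/-!
Write `P(t) = ∫₀ᵗ Φ` in the Banach algebra `L(H)`. Polarizing (C2), using the symmetry of
`ip t` and of `Φ(s)`, gives `ι_t^* = 1 + P(t)`, so `ι_{-t}^* = (1 + P(t))⁻¹`. The resolvent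
identity `A - B = A (v - u) B` (for `A u = 1 = v B`) and `‖ι_{-t}^*‖ ≤ c1²` make
`t ↦ ι_{-t}^*` absolutely continuous, and at every Lebesgue point of `Φ` the derivative of
inversion gives `d/dt ι_{-t}^* = -ι_{-t}^* Φ(t) ι_{-t}^*`. Hence
`t ↦ ι_{-t}^* + ∫₀ᵗ ι_{-s}^* Φ(s) ι_{-s}^* ds` is absolutely continuous with derivative zero
almost everywhere, so it is constant, equal to its value `1` at `t = 0`.
-/

open MeasureTheory Set Filter Topology
open scoped RealInnerProductSpace

theorem AbsolutelyContinuousOnInterval.of_dist_le_mul {X Y : Type*} [PseudoMetricSpace X]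
    [PseudoMetricSpace Y] {f : ℝ → X} {g : ℝ → Y} {a b K : ℝ}
    (hf : AbsolutelyContinuousOnInterval f a b)
    (hfg : ∀ x ∈ uIcc a b, ∀ y ∈ uIcc a b, dist (g x) (g y) ≤ K * dist (f x) (f y)) :
    AbsolutelyContinuousOnInterval g a b := by
  refine squeeze_zero' (.of_forall fun E => Finset.sum_nonneg fun _ _ => dist_nonneg) ?_
    (by simpa using Tendsto.const_mul K hf)
  filter_upwards [mem_inf_of_right (mem_principal_self _)] with E hE
  rw [Finset.mul_sum]
  exact Finset.sum_le_sum fun i hi => hfg _ (hE.1 i hi).1 _ (hE.1 i hi).2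

theorem IntervalIntegrable.absolutelyContinuousOnInterval_primitive {E : Type*}
    [NormedAddCommGroup E] [NormedSpace ℝ E] {f : ℝ → E} {a b c : ℝ}
    (hf : IntervalIntegrable f volume a b) (hc : c ∈ uIcc a b) :
    AbsolutelyContinuousOnInterval (fun x => ∫ s in c..x, f s) a b := by
  refine (hf.norm.absolutelyContinuousOnInterval_intervalIntegral hc).of_dist_le_mul
    (K := 1) fun x hx y hy => ?_
  have hint : ∀ {z}, z ∈ uIcc a b → IntervalIntegrable f volume c z := fun hz =>
    hf.mono_set (uIcc_subset_uIcc hc hz)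
  have hint' : ∀ {z}, z ∈ uIcc a b → IntervalIntegrable (fun s => ‖f s‖) volume c z :=
    fun hz => (hint hz).norm
  rw [one_mul, dist_eq_norm, Real.dist_eq, intervalIntegral.integral_interval_sub_left (hint hx)
    (hint hy), intervalIntegral.integral_interval_sub_left (hint' hx) (hint' hy)]
  exact intervalIntegral.norm_integral_le_abs_integral_norm

theorem norm_sub_le_of_mul_eq_one {R : Type*} [NormedRing R] {a b u v : R} (ha : a * u = 1)
    (hb : v * b = 1) : ‖a - b‖ ≤ ‖a‖ * ‖v - u‖ * ‖b‖ := by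
  have : a - b = a * (v - u) * b := by
    rw [mul_sub, sub_mul, mul_assoc, hb, mul_one, ha, one_mul]
  rw [this]
  exact norm_mul₃_le

theorem HasDerivAt.of_eventually_inverse {R : Type*} [NormedRing R] [NormedAlgebra ℝ R]
    [HasSummableGeomSeries R] {u a : ℝ → R} {u' : R} {t : ℝ} (hu : HasDerivAt u u' t)
    (hinv : ∀ᶠ r in 𝓝 t, a r * u r = 1 ∧ u r * a r = 1) :
    HasDerivAt a (-(a t * u' * a t)) t := by
  let U : Rˣ := ⟨u t, a t, hinv.self_of_nhds.2, hinv.self_of_nhds.1⟩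
  have h := (hasFDerivAt_ringInverse (𝕜 := ℝ) U).comp_hasDerivAt t hu
  refine h.congr_of_eventuallyEq ?_ |>.congr_deriv ?_
  · filter_upwards [hinv] with r hr
    let V : Rˣ := ⟨u r, a r, hr.2, hr.1⟩
    exact (Ring.inverse_unit V).symm
  · simp [U]

section InverseOfPrimitive

variable {R : Type*} [NormedRing R] [NormedAlgebra ℝ R] {φ a : ℝ → R} {c : R} {C T : ℝ}

theorem absolutelyContinuousOnInterval_of_mul_eq_one (hφ : IntervalIntegrable φ volume 0 T)
    (hinv : ∀ r ∈ uIcc 0 T,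
      a r * (c + ∫ s in 0..r, φ s) = 1 ∧ (c + ∫ s in 0..r, φ s) * a r = 1)
    (hbound : ∀ r ∈ uIcc 0 T, ‖a r‖ ≤ C) :
    AbsolutelyContinuousOnInterval a 0 T := by
  refine (hφ.absolutelyContinuousOnInterval_primitive left_mem_uIcc).of_dist_le_mul
    (K := C * C) fun x hx y hy => ?_
  calc dist (a x) (a y)
      ≤ ‖a x‖ * ‖(c + ∫ s in 0..y, φ s) - (c + ∫ s in 0..x, φ s)‖ * ‖a y‖ := by
        rw [dist_eq_norm]; exact norm_sub_le_of_mul_eq_one (hinv x hx).1 (hinv y hy).2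
    _ ≤ C * ‖(c + ∫ s in 0..y, φ s) - (c + ∫ s in 0..x, φ s)‖ * C := by
        have hC : 0 ≤ C := (norm_nonneg _).trans (hbound x hx)
        gcongr
        · exact hbound x hx
        · exact hbound y hy
    _ = C * C * dist (∫ s in 0..x, φ s) (∫ s in 0..y, φ s) := by
        rw [add_sub_add_left_eq_sub, dist_comm, dist_eq_norm]; ring

theorem eq_sub_intervalIntegral_of_mul_eq_one [CompleteSpace R]
    (hφ : IntervalIntegrable φ volume 0 T)
    (hinv : ∀ r ∈ uIcc 0 T,
      a r * (c + ∫ s in 0..r, φ s) = 1 ∧ (c + ∫ s in 0..r, φ s) * a r = 1)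
    (hbound : ∀ r ∈ uIcc 0 T, ‖a r‖ ≤ C) :
    a T = a 0 - ∫ s in 0..T, a s * φ s * a s := by
  have ha := absolutelyContinuousOnInterval_of_mul_eq_one hφ hinv hbound
  have haφa := (hφ.continuousOn_mul ha.continuousOn).mul_continuousOn ha.continuousOn
  set g : ℝ → R := fun r => a r + ∫ s in 0..r, a s * φ s * a s
  have hg : AbsolutelyContinuousOnInterval g 0 T :=
    ha.add (haφa.absolutelyContinuousOnInterval_primitive left_mem_uIcc)
  have hg' : ∀ᵐ r, r ∈ uIcc 0 T → HasDerivAt g 0 r := by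
    have h0 : ∀ᵐ r : ℝ, r ≠ 0 := by simp [ae_iff, measure_singleton]
    have hT : ∀ᵐ r : ℝ, r ≠ T := by simp [ae_iff, measure_singleton]
    filter_upwards [hφ.ae_hasDerivAt_integral, haφa.ae_hasDerivAt_integral, h0, hT]
      with r hP hQ hr0 hrT hr
    have hnhds : uIcc 0 T ∈ 𝓝 r := by
      rw [uIcc] at hr ⊢
      exact Icc_mem_nhds (hr.1.lt_of_ne (by grind)) (hr.2.lt_of_ne (by grind))
    have hu := ((hP hr 0 left_mem_uIcc).const_add c).of_eventually_inverse
      (a := a) (Filter.mem_of_superset hnhds hinv)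
    simpa using hu.fun_add (hQ hr 0 left_mem_uIcc)
  obtain ⟨g₀, hg₀⟩ := hg.const_of_ae_hasDerivAt_zero hg'
  have := (hg₀ T right_mem_uIcc).trans (hg₀ 0 left_mem_uIcc).symm
  simp only [g, intervalIntegral.integral_same, add_zero] at this
  rw [← this, add_sub_cancel_right]

end InverseOfPrimitive

section

variable {H : Type*} [NormedAddCommGroup H] [InnerProductSpace ℝ H] [CompleteSpace H]
  {Φ : ℝ → H →L[ℝ] H} {a b : ℝ}

theorem inner_intervalIntegral_apply (hΦ : IntervalIntegrable Φ volume a b) (x y : H) :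
    ⟪(∫ s in a..b, Φ s) x, y⟫ = ∫ s in a..b, ⟪Φ s x, y⟫ := by
  have hL := ((innerSLFlip ℝ y).comp
    (ContinuousLinearMap.apply ℝ H x)).intervalIntegral_comp_comm hΦ
  simpa using hL.symm

theorem ContinuousLinearMap.eq_one_add_intervalIntegral_of_inner_self {ι : H →L[ℝ] H}
    (hι : ∀ x y, ⟪ι x, y⟫ = ⟪x, ι y⟫)
    (hΦsymm : ∀ s ∈ uIcc a b, ∀ x y, ⟪Φ s x, y⟫ = ⟪x, Φ s y⟫)
    (hΦ : IntervalIntegrable Φ volume a b)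
    (hquad : ∀ x, ⟪ι x, x⟫ - ⟪x, x⟫ = ∫ s in a..b, ⟪x, Φ s x⟫) :
    ι = 1 + ∫ s in a..b, Φ s := by
  set P := ∫ s in a..b, Φ s
  have hP : ∀ x y, ⟪P x, y⟫ = ⟪x, P y⟫ := fun x y => by
    rw [← real_inner_comm x, inner_intervalIntegral_apply hΦ, inner_intervalIntegral_apply hΦ]
    exact intervalIntegral.integral_congr fun s hs => by
      rw [hΦsymm s hs, real_inner_comm]
  have hD : ((ι - 1 - P : H →L[ℝ] H) : H →ₗ[ℝ] H).IsSymmetric := fun x y => by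
    simp only [coe_coe, sub_apply, one_apply_eq_self, inner_sub_left, inner_sub_right, hι, hP]
  have hDx : ∀ x, ⟪(ι - 1 - P) x, x⟫ = 0 := fun x => by
    rw [sub_apply, sub_apply, one_apply_eq_self, inner_sub_left, inner_sub_left, hquad,
      inner_intervalIntegral_apply hΦ, sub_eq_zero]
    exact intervalIntegral.integral_congr fun s _ => real_inner_comm _ _
  rw [← sub_eq_zero, sub_add_eq_sub_sub]
  exact ContinuousLinearMap.coe_injective (hD.inner_map_self_eq_zero.mp hDx)

end

theorem iota_inv_integral_formula_general
    {H : Type*} [NormedAddCommGroup H] [InnerProductSpace ℝ H] [CompleteSpace H]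
    (T : ℝ)
    (ip : ℝ → H → H → ℝ)
    (hsymm : ∀ t ∈ Icc (0:ℝ) T, ∀ x y : H, ip t x y = ip t y x)
    (c1 : ℝ)
    (Φ : ℝ → H →L[ℝ] H)
    (hΦsa : ∀ t ∈ Icc (0:ℝ) T, ∀ x y : H, ⟪Φ t x, y⟫ = ⟪x, Φ t y⟫)
    (hΦmeas : AEStronglyMeasurable (fun t => Φ t) (volume.restrict (Icc (0:ℝ) T)))
    (hΦint : IntegrableOn (fun t => ‖Φ t‖) (Icc (0:ℝ) T))
    (hC2 : ∀ t ∈ Icc (0:ℝ) T, ∀ x : H, ip t x x - ⟪x, x⟫ = ∫ s in (0:ℝ)..t, ⟪x, Φ s x⟫)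
    (ι : ℝ → H →L[ℝ] H)
    (hι : ∀ t ∈ Icc (0:ℝ) T, ∀ x y : H, ⟪ι t x, y⟫ = ip t x y)
    (ιinv : ℝ → H →L[ℝ] H)
    (hιinv : ∀ t ∈ Icc (0:ℝ) T, (∀ x : H, ιinv t (ι t x) = x) ∧ (∀ x : H, ι t (ιinv t x) = x))
    (hιinvnorm : ∀ t ∈ Icc (0:ℝ) T, ‖ιinv t‖ ≤ c1 ^ 2)
    :
    ∀ t ∈ Icc (0:ℝ) T, ∀ x y : H,
      ⟪ιinv t x, y⟫ = ⟪x, y⟫ - ∫ s in (0:ℝ)..t, ⟪ιinv s (Φ s (ιinv s x)), y⟫ := by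
  intro t ht x y
  have hsub : uIcc 0 t ⊆ Icc 0 T := by
    rw [uIcc_of_le ht.1]; exact Icc_subset_Icc le_rfl ht.2
  have hΦ : IntervalIntegrable Φ volume 0 t :=
    (IntegrableOn.mono_set ⟨hΦmeas, (hasFiniteIntegral_norm_iff Φ).mp hΦint.2⟩
      hsub).intervalIntegrable
  have hιP : ∀ r ∈ uIcc 0 t, ι r = 1 + ∫ s in 0..r, Φ s := fun r hr =>
    ContinuousLinearMap.eq_one_add_intervalIntegral_of_inner_self
      (fun x y => by rw [hι r (hsub hr), hsymm r (hsub hr), ← hι r (hsub hr), real_inner_comm])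
      (fun s hs => hΦsa s (hsub (uIcc_subset_uIcc_left hr hs)))
      (hΦ.mono_set (uIcc_subset_uIcc_left hr))
      (fun x => by rw [hι r (hsub hr), hC2 r (hsub hr)])
  have hinv : ∀ r ∈ uIcc 0 t, ιinv r * (1 + ∫ s in 0..r, Φ s) = 1 ∧
      (1 + ∫ s in 0..r, Φ s) * ιinv r = 1 := fun r hr => by
    rw [← hιP r hr]
    exact ⟨ContinuousLinearMap.ext (hιinv r (hsub hr)).1,
      ContinuousLinearMap.ext (hιinv r (hsub hr)).2⟩
  have hbound : ∀ r ∈ uIcc 0 t, ‖ιinv r‖ ≤ c1 ^ 2 := fun r hr => hιinvnorm r (hsub hr)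
  have hA0 : ιinv 0 = 1 := by simpa using (hinv 0 left_mem_uIcc).1
  have hA := (absolutelyContinuousOnInterval_of_mul_eq_one hΦ hinv hbound).continuousOn
  rw [eq_sub_intervalIntegral_of_mul_eq_one hΦ hinv hbound, hA0, sub_apply, one_apply_eq_self,
    inner_sub_left,
    inner_intervalIntegral_apply ((hΦ.continuousOn_mul hA).mul_continuousOn hA)]
  rfl

/-- For separable `H`, for all `x, y ∈ H` and `t ∈ [0,T]`,
`(ι_{-t}^* x, y) = (x, y) − ∫_0^t (ι_{-s}^* Φ(s) ι_{-s}^* x, y) ds`. -/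
theorem iota_inv_integral_formula
    {H : Type*} [NormedAddCommGroup H] [InnerProductSpace ℝ H] [CompleteSpace H] [TopologicalSpace.SeparableSpace H]
    (T : ℝ) (hT : 0 < T)
    (ip : ℝ → H → H → ℝ)
    (hsymm : ∀ t ∈ Icc (0:ℝ) T, ∀ x y : H, ip t x y = ip t y x)
    (hadd : ∀ t ∈ Icc (0:ℝ) T, ∀ x x' y : H, ip t (x + x') y = ip t x y + ip t x' y)
    (hsmul : ∀ t ∈ Icc (0:ℝ) T, ∀ (c : ℝ) (x y : H), ip t (c • x) y = c * ip t x y)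
    (hip0 : ∀ x y : H, ip 0 x y = ⟪x, y⟫)
    (c1 : ℝ) (hc1 : 1 ≤ c1)
    (hC1 : ∀ t ∈ Icc (0:ℝ) T, ∀ x : H,
      c1⁻¹ * ‖x‖ ≤ Real.sqrt (ip t x x) ∧ Real.sqrt (ip t x x) ≤ c1 * ‖x‖)
    (Φ : ℝ → H →L[ℝ] H)
    (hΦsa : ∀ t ∈ Icc (0:ℝ) T, ∀ x y : H, ⟪Φ t x, y⟫ = ⟪x, Φ t y⟫)
    (hΦmeas : AEStronglyMeasurable (fun t => Φ t) (volume.restrict (Icc (0:ℝ) T)))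
    (hΦint : IntegrableOn (fun t => ‖Φ t‖) (Icc (0:ℝ) T))
    (hC2 : ∀ t ∈ Icc (0:ℝ) T, ∀ x : H, ip t x x - ⟪x, x⟫ = ∫ s in (0:ℝ)..t, ⟪x, Φ s x⟫)
    (ι : ℝ → H →L[ℝ] H)
    (hι : ∀ t ∈ Icc (0:ℝ) T, ∀ x y : H, ⟪ι t x, y⟫ = ip t x y)
    (ιinv : ℝ → H →L[ℝ] H)
    (hιinv : ∀ t ∈ Icc (0:ℝ) T, (∀ x : H, ιinv t (ι t x) = x) ∧ (∀ x : H, ι t (ιinv t x) = x))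
    (hιinvnorm : ∀ t ∈ Icc (0:ℝ) T, ‖ιinv t‖ ≤ c1 ^ 2)
    :
    ∀ t ∈ Icc (0:ℝ) T, ∀ x y : H,
      ⟪ιinv t x, y⟫ = ⟪x, y⟫ - ∫ s in (0:ℝ)..t, ⟪ιinv s (Φ s (ιinv s x)), y⟫ :=
  iota_inv_integral_formula_general T ip hsymm c1 Φ hΦsa hΦmeas hΦint hC2 ι hι ιinv hιinv hιinvnorm
end

section
/- Let Y ∈ L¹([0,T]; H) (Bochner integrable) and let X : [0,T] → H satisfy X_t = X_0 + ∫_0^t Y_s ds for all t ∈ [0,T]. Then for every t ∈ [0,T]: ι_t^* X_t = X_0 + ∫_0^t ι_s^* Y_s ds + ∫_0^t Φ(s) X_s ds. -/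
open MeasureTheory Set
open scoped RealInnerProductSpace

/-!
Polarizing (C2) shows that `ι_s^*` and `1 + ∫_0^s Φ(r) dr` are self-adjoint operators with the
same quadratic form, hence equal. Therefore
`∫_0^t ι_s^* Y_s ds = X_t - X_0 + ∫_0^t ∫_0^s Φ(r) Y_s dr ds`, and Fubini on the triangle
`0 < r ≤ s ≤ t` turns the double integral into `∫_0^t Φ(r) (X_t - X_r) dr`.
-/

open intervalIntegral Function

section ContinuousLinearMapApply

variable {E F : Type*} [NormedAddCommGroup E] [NormedSpace ℝ E] [NormedAddCommGroup F]
  [NormedSpace ℝ F]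

section Compact

variable {α : Type*} [MeasurableSpace α] [TopologicalSpace α] [OpensMeasurableSpace α]
  [T2Space α] {μ : Measure α} {K : Set α}

theorem MeasureTheory.IntegrableOn.clm_apply_continuousOn [SecondCountableTopologyEither α E]
    {Φ : α → E →L[ℝ] F} {X : α → E} (hΦ : IntegrableOn Φ K μ) (hX : ContinuousOn X K)
    (hK : IsCompact K) : IntegrableOn (fun a => Φ a (X a)) K μ := by
  obtain ⟨C, hC⟩ := hK.exists_bound_of_continuousOn hX
  exact (ContinuousLinearMap.id ℝ (E →L[ℝ] F)).integrable_of_bilin_of_bdd_right C hΦ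
    (hX.aestronglyMeasurable hK.measurableSet) (ae_restrict_of_forall_mem hK.measurableSet hC)

theorem MeasureTheory.IntegrableOn.continuousOn_clm_apply
    [SecondCountableTopologyEither α (E →L[ℝ] F)] {Ψ : α → E →L[ℝ] F} {Y : α → E}
    (hY : IntegrableOn Y K μ) (hΨ : ContinuousOn Ψ K) (hK : IsCompact K) :
    IntegrableOn (fun a => Ψ a (Y a)) K μ := by
  obtain ⟨C, hC⟩ := hK.exists_bound_of_continuousOn hΨ
  exact (ContinuousLinearMap.id ℝ (E →L[ℝ] F)).integrable_of_bilin_of_bdd_left C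
    (hΨ.aestronglyMeasurable hK.measurableSet) (ae_restrict_of_forall_mem hK.measurableSet hC) hY

end Compact

theorem MeasureTheory.IntegrableOn.clm_apply_prod {Φ : ℝ → E →L[ℝ] F} {Y : ℝ → E} {s t : Set ℝ}
    (hΦ : IntegrableOn Φ s) (hY : IntegrableOn Y t) :
    IntegrableOn (fun p : ℝ × ℝ => Φ p.1 (Y p.2)) (s ×ˢ t) := by
  rw [IntegrableOn, Measure.volume_eq_prod, ← Measure.prod_restrict]
  refine (hΦ.norm.mul_prod hY.norm).mono' ?_ (.of_forall fun p => (Φ p.1).le_opNorm (Y p.2))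
  exact (ContinuousLinearMap.id ℝ (E →L[ℝ] F)).aestronglyMeasurable_comp₂
    hΦ.aestronglyMeasurable.comp_fst hY.aestronglyMeasurable.comp_snd

theorem integral_integral_triangle_swap {f : ℝ → ℝ → E} {a b : ℝ} (hab : a ≤ b)
    (hf : IntegrableOn (uncurry f) (Ioc a b ×ˢ Ioc a b)) :
    ∫ s in a..b, ∫ r in a..s, f r s = ∫ r in a..b, ∫ s in r..b, f r s := by
  set μ := volume.restrict (Ioc a b)
  set g : ℝ → ℝ → E := fun r s => {p : ℝ × ℝ | p.1 ≤ p.2}.indicator (uncurry f) (r, s)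
  have hg_int : Integrable (uncurry g) (μ.prod μ) := by
    rw [Measure.prod_restrict, ← Measure.volume_eq_prod]
    exact hf.indicator (measurableSet_le measurable_fst measurable_snd)
  have h_left : ∀ s ∈ Ioc a b, ∫ r, g r s ∂μ = ∫ r in a..s, f r s := fun s hs => by
    have : (fun r => g r s) = (Iic s).indicator (fun r => f r s) := by
      ext r; simp [g, indicator_apply]
    rw [this, setIntegral_indicator measurableSet_Iic, Ioc_inter_Iic, min_eq_right hs.2,
      integral_of_le hs.1.le]
  have h_right : ∀ r ∈ Ioc a b, ∫ s, g r s ∂μ = ∫ s in r..b, f r s := fun r hr => by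
    have : (fun s => g r s) = (Ici r).indicator (fun s => f r s) := by
      ext s; simp [g, indicator_apply]
    have h_inter : Ioc a b ∩ Ici r = Icc r b := by
      ext s; simp only [mem_inter_iff, mem_Ioc, mem_Ici, mem_Icc]; grind
    rw [this, setIntegral_indicator measurableSet_Ici, h_inter, integral_Icc_eq_integral_Ioc,
      integral_of_le hr.2]
  calc ∫ s in a..b, ∫ r in a..s, f r s = ∫ s, ∫ r, g r s ∂μ ∂μ := by
        rw [integral_of_le hab]
        exact (setIntegral_congr_fun measurableSet_Ioc fun s hs => h_left s hs).symm
    _ = ∫ r, ∫ s, g r s ∂μ ∂μ := (integral_integral_swap hg_int).symm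
    _ = ∫ r in a..b, ∫ s in r..b, f r s := by
        rw [integral_of_le hab]
        exact setIntegral_congr_fun measurableSet_Ioc fun r hr => h_right r hr

theorem integral_primitive_apply_eq [CompleteSpace E] [CompleteSpace F] {Φ : ℝ → E →L[ℝ] F}
    {Y : ℝ → E} {a b : ℝ} (hab : a ≤ b) (hΦ : IntegrableOn Φ (Icc a b))
    (hY : IntegrableOn Y (Icc a b)) :
    ∫ s in a..b, (∫ r in a..s, Φ r) (Y s) = ∫ r in a..b, Φ r (∫ s in r..b, Y s) := by
  have h_sub : ∀ x ∈ uIcc a b, uIcc a x ⊆ Icc a b ∧ uIcc x b ⊆ Icc a b := fun x hx => by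
    rw [uIcc_of_le hab] at hx
    rw [uIcc_of_le hx.1, uIcc_of_le hx.2]
    exact ⟨Icc_subset_Icc_right hx.2, Icc_subset_Icc_left hx.1⟩
  calc ∫ s in a..b, (∫ r in a..s, Φ r) (Y s) = ∫ s in a..b, ∫ r in a..s, Φ r (Y s) :=
        integral_congr fun s hs => ContinuousLinearMap.intervalIntegral_apply (φ := Φ)
          ((hΦ.mono_set (h_sub s hs).1).intervalIntegrable) _
    _ = ∫ r in a..b, ∫ s in r..b, Φ r (Y s) := integral_integral_triangle_swap hab <|
        (hΦ.mono_set Ioc_subset_Icc_self).clm_apply_prod (hY.mono_set Ioc_subset_Icc_self)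
    _ = ∫ r in a..b, Φ r (∫ s in r..b, Y s) :=
        integral_congr fun r hr => (Φ r).intervalIntegral_comp_comm
          ((hY.mono_set (h_sub r hr).2).intervalIntegrable)

theorem integral_primitive_apply_add_integral_apply [CompleteSpace E] [CompleteSpace F]
    {Φ : ℝ → E →L[ℝ] F} {X Y : ℝ → E} {a b : ℝ} (hab : a ≤ b) (hΦ : IntegrableOn Φ (Icc a b))
    (hY : IntegrableOn Y (Icc a b)) (hX : ∀ s ∈ Icc a b, X s = X a + ∫ r in a..s, Y r) :
    (∫ s in a..b, (∫ r in a..s, Φ r) (Y s)) + ∫ r in a..b, Φ r (X r) =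
      (∫ r in a..b, Φ r) (X b) := by
  have hb : b ∈ Icc a b := right_mem_Icc.2 hab
  have hX_cont : ContinuousOn X (Icc a b) :=
    (continuousOn_const.add (uIcc_of_le hab ▸ continuousOn_primitive_interval
      (uIcc_of_le hab ▸ hY))).congr hX
  have hX_sub : ∀ r ∈ uIcc a b, ∫ s in r..b, Y s = X b - X r := fun r hr => by
    rw [uIcc_of_le hab] at hr
    rw [hX b hb, hX r hr, add_sub_add_left_eq_sub, integral_interval_sub_left
      (hY.mono_set (uIcc_of_le hab).subset).intervalIntegrable
      (hY.mono_set (uIcc_of_le hr.1 ▸ Icc_subset_Icc_right hr.2)).intervalIntegrable]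
  have hΦX_int : IntegrableOn (fun r => Φ r (X r)) (Icc a b) :=
    hΦ.clm_apply_continuousOn hX_cont isCompact_Icc
  have hΦX_sub_int : IntegrableOn (fun r => Φ r (X b - X r)) (Icc a b) :=
    hΦ.clm_apply_continuousOn (continuousOn_const.sub hX_cont) isCompact_Icc
  rw [← intervalIntegrable_iff_integrableOn_Icc_of_le hab] at hΦX_int hΦX_sub_int
  calc (∫ s in a..b, (∫ r in a..s, Φ r) (Y s)) + ∫ r in a..b, Φ r (X r)
      = (∫ r in a..b, Φ r (X b - X r)) + ∫ r in a..b, Φ r (X r) := by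
        rw [integral_primitive_apply_eq hab hΦ hY,
          integral_congr fun r hr => congrArg (Φ r) (hX_sub r hr)]
    _ = ∫ r in a..b, Φ r (X b) := by
        rw [← integral_add hΦX_sub_int hΦX_int]
        simp only [map_sub, sub_add_cancel]
    _ = (∫ r in a..b, Φ r) (X b) :=
        (ContinuousLinearMap.intervalIntegral_apply (φ := Φ)
          ((intervalIntegrable_iff_integrableOn_Icc_of_le hab).2 hΦ) _).symm

end ContinuousLinearMapApply

section Symmetric

variable {H : Type*} [NormedAddCommGroup H] [InnerProductSpace ℝ H] [CompleteSpace H]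
  {Φ : ℝ → H →L[ℝ] H} {a b : ℝ}

theorem isSymmetric_intervalIntegral (hΦ : IntervalIntegrable Φ volume a b)
    (hΦ_symm : ∀ r ∈ uIoc a b, (Φ r : H →ₗ[ℝ] H).IsSymmetric) :
    ((∫ r in a..b, Φ r : H →L[ℝ] H) : H →ₗ[ℝ] H).IsSymmetric := fun x y => by
  let D := (innerSL ℝ y).comp (ContinuousLinearMap.apply ℝ H x) -
    (innerSL ℝ x).comp (ContinuousLinearMap.apply ℝ H y)
  have hD : D (∫ r in a..b, Φ r) = 0 := by
    rw [← D.intervalIntegral_comp_comm hΦ, ← intervalIntegral.integral_zero]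
    refine integral_congr_ae (.of_forall fun r hr => ?_)
    change ⟪y, Φ r x⟫ - ⟪x, Φ r y⟫ = 0
    rw [real_inner_comm, sub_eq_zero]
    exact hΦ_symm r hr x y
  simpa [D, sub_eq_zero, real_inner_comm] using hD

theorem eq_one_add_intervalIntegral_of_inner_map_self {A : H →L[ℝ] H}
    (hA : (A : H →ₗ[ℝ] H).IsSymmetric) (hΦ : IntervalIntegrable Φ volume a b)
    (hΦ_symm : ∀ r ∈ uIoc a b, (Φ r : H →ₗ[ℝ] H).IsSymmetric)
    (h : ∀ x, ⟪A x, x⟫ = ⟪x, x⟫ + ∫ r in a..b, ⟪x, Φ r x⟫) :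
    A = 1 + ∫ r in a..b, Φ r := by
  set Ψ := ∫ r in a..b, Φ r
  have hΨ : ∀ x, ⟪Ψ x, x⟫ = ∫ r in a..b, ⟪x, Φ r x⟫ := fun x => by
    rw [real_inner_comm]
    exact (((innerSL ℝ x).comp (ContinuousLinearMap.apply ℝ H x)).intervalIntegral_comp_comm
      hΦ).symm
  have h_symm : ((A - (1 + Ψ) : H →L[ℝ] H) : H →ₗ[ℝ] H).IsSymmetric :=
    hA.sub (LinearMap.IsSymmetric.id.add (isSymmetric_intervalIntegral hΦ hΦ_symm))
  have h_zero := h_symm.inner_map_self_eq_zero.1 fun x => by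
    simp [inner_sub_left, inner_add_left, h, hΨ]
  rw [← sub_eq_zero]
  exact ContinuousLinearMap.coe_injective h_zero

end Symmetric

theorem iota_of_absolutely_continuous_path_general
    {H : Type*} [NormedAddCommGroup H] [InnerProductSpace ℝ H] [CompleteSpace H]
    (T : ℝ)
    (ip : ℝ → H → H → ℝ)
    (hsymm : ∀ t ∈ Icc (0:ℝ) T, ∀ x y : H, ip t x y = ip t y x)
    (Φ : ℝ → H →L[ℝ] H)
    (hΦsa : ∀ t ∈ Icc (0:ℝ) T, ∀ x y : H, ⟪Φ t x, y⟫ = ⟪x, Φ t y⟫)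
    (hΦmeas : AEStronglyMeasurable (fun t => Φ t) (volume.restrict (Icc (0:ℝ) T)))
    (hΦint : IntegrableOn (fun t => ‖Φ t‖) (Icc (0:ℝ) T))
    (hC2 : ∀ t ∈ Icc (0:ℝ) T, ∀ x : H, ip t x x - ⟪x, x⟫ = ∫ s in (0:ℝ)..t, ⟪x, Φ s x⟫)
    (ι : ℝ → H →L[ℝ] H)
    (hι : ∀ t ∈ Icc (0:ℝ) T, ∀ x y : H, ⟪ι t x, y⟫ = ip t x y)
    (Y : ℝ → H) (hY : IntegrableOn Y (Icc (0:ℝ) T))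
    (X : ℝ → H) (hX : ∀ t ∈ Icc (0:ℝ) T, X t = X 0 + ∫ s in (0:ℝ)..t, Y s)
    :
    ∀ t ∈ Icc (0:ℝ) T,
      ι t (X t) = X 0 + (∫ s in (0:ℝ)..t, ι s (Y s)) + ∫ s in (0:ℝ)..t, Φ s (X s) := by
  intro t ht
  have hΦ : IntegrableOn Φ (Icc 0 T) := (integrable_norm_iff hΦmeas).1 hΦint
  have hι_eq : ∀ s ∈ Icc 0 T, ι s = 1 + ∫ r in 0..s, Φ r := fun s hs => by
    have h_sub : uIcc 0 s ⊆ Icc 0 T := uIcc_of_le hs.1 ▸ Icc_subset_Icc_right hs.2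
    refine eq_one_add_intervalIntegral_of_inner_map_self (fun x y => ?_)
      (hΦ.mono_set h_sub).intervalIntegrable
      (fun r hr => hΦsa r (h_sub (uIoc_subset_uIcc hr))) (fun x => ?_)
    · rw [ContinuousLinearMap.coe_coe, hι s hs, hsymm s hs, ← hι s hs, real_inner_comm]
    · rw [hι s hs, ← hC2 s hs x]
      ring
  have h_sub : uIcc 0 t ⊆ Icc 0 T := uIcc_of_le ht.1 ▸ Icc_subset_Icc_right ht.2
  have hΦt : IntegrableOn Φ (uIcc 0 t) := hΦ.mono_set h_sub
  have hYt : IntegrableOn Y (uIcc 0 t) := hY.mono_set h_sub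
  have hΨY_int : IntervalIntegrable (fun s => (∫ r in 0..s, Φ r) (Y s)) volume 0 t :=
    (hYt.continuousOn_clm_apply (continuousOn_primitive_interval hΦt)
      isCompact_uIcc).intervalIntegrable
  rw [uIcc_of_le ht.1] at h_sub hΦt hYt
  calc ι t (X t) = X t + (∫ r in 0..t, Φ r) (X t) := by rw [hι_eq t ht]; rfl
    _ = X 0 + ((∫ s in 0..t, Y s) + ∫ s in 0..t, (∫ r in 0..s, Φ r) (Y s))
          + ∫ r in 0..t, Φ r (X r) := by
        rw [← integral_primitive_apply_add_integral_apply ht.1 hΦt hYt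
          fun s hs => hX s (h_sub hs), hX t ht]
        simp only [add_assoc]
    _ = X 0 + (∫ s in 0..t, ι s (Y s)) + ∫ s in 0..t, Φ s (X s) := by
        rw [← integral_add (hYt.mono_set (uIcc_of_le ht.1).subset).intervalIntegrable hΨY_int]
        congr 2
        exact integral_congr fun s hs => by rw [hι_eq s (h_sub (uIcc_of_le ht.1 ▸ hs))]; rfl

/-- If `X_t = X_0 + ∫_0^t Y_s ds` with `Y ∈ L¹([0,T];H)`, then
`ι_t^* X_t = X_0 + ∫_0^t ι_s^* Y_s ds + ∫_0^t Φ(s) X_s ds` for all `t ∈ [0,T]`. -/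
theorem iota_of_absolutely_continuous_path
    {H : Type*} [NormedAddCommGroup H] [InnerProductSpace ℝ H] [CompleteSpace H]
    (T : ℝ) (hT : 0 < T)
    (ip : ℝ → H → H → ℝ)
    (hsymm : ∀ t ∈ Icc (0:ℝ) T, ∀ x y : H, ip t x y = ip t y x)
    (hadd : ∀ t ∈ Icc (0:ℝ) T, ∀ x x' y : H, ip t (x + x') y = ip t x y + ip t x' y)
    (hsmul : ∀ t ∈ Icc (0:ℝ) T, ∀ (c : ℝ) (x y : H), ip t (c • x) y = c * ip t x y)
    (hip0 : ∀ x y : H, ip 0 x y = ⟪x, y⟫)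
    (c1 : ℝ) (hc1 : 1 ≤ c1)
    (hC1 : ∀ t ∈ Icc (0:ℝ) T, ∀ x : H,
      c1⁻¹ * ‖x‖ ≤ Real.sqrt (ip t x x) ∧ Real.sqrt (ip t x x) ≤ c1 * ‖x‖)
    (Φ : ℝ → H →L[ℝ] H)
    (hΦsa : ∀ t ∈ Icc (0:ℝ) T, ∀ x y : H, ⟪Φ t x, y⟫ = ⟪x, Φ t y⟫)
    (hΦmeas : AEStronglyMeasurable (fun t => Φ t) (volume.restrict (Icc (0:ℝ) T)))
    (hΦint : IntegrableOn (fun t => ‖Φ t‖) (Icc (0:ℝ) T))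
    (hC2 : ∀ t ∈ Icc (0:ℝ) T, ∀ x : H, ip t x x - ⟪x, x⟫ = ∫ s in (0:ℝ)..t, ⟪x, Φ s x⟫)
    (ι : ℝ → H →L[ℝ] H)
    (hι : ∀ t ∈ Icc (0:ℝ) T, ∀ x y : H, ⟪ι t x, y⟫ = ip t x y)
    (Y : ℝ → H) (hY : IntegrableOn Y (Icc (0:ℝ) T))
    (X : ℝ → H) (hX : ∀ t ∈ Icc (0:ℝ) T, X t = X 0 + ∫ s in (0:ℝ)..t, Y s)
    :
    ∀ t ∈ Icc (0:ℝ) T,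
      ι t (X t) = X 0 + (∫ s in (0:ℝ)..t, ι s (Y s)) + ∫ s in (0:ℝ)..t, Φ s (X s) :=
  iota_of_absolutely_continuous_path_general T ip hsymm Φ hΦsa hΦmeas hΦint hC2 ι hι Y hY X hX
end
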